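/- arXiv:1305.0099 — 7 statements merged into one kernel-verified Lean document; each statement's English description precedes it below -/
import Mathlib

section
/- The line segments ℓ_a = { (x, √a (x + 2 + a)) : x ∈ [−2−a, 1] } for a ∈ [0,1] are pairwise disjoint: if 0 ≤ a < b ≤ 1 then ℓ_a ∩ ℓ_b = ∅. -/
/-! On a common abscissa `x ≥ -2 - a`, the height `√a (x + 2 + a)` of `ℓ_a` is strictly increasing
in `a`, since both factors are nonnegative and increasing; so `ℓ_a` and `ℓ_b` have no common point. -/

lemma sqrt_mul_add_self_lt_sqrt_mul_add_self {a b c : ℝ} (ha : 0 ≤ a) (hab : a < b)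
    (hc : 0 ≤ c + a) : Real.sqrt a * (c + a) < Real.sqrt b * (c + b) :=
  calc Real.sqrt a * (c + a) ≤ Real.sqrt b * (c + a) :=
        mul_le_mul_of_nonneg_right (Real.sqrt_le_sqrt hab.le) hc
    _ < Real.sqrt b * (c + b) :=
        mul_lt_mul_of_pos_left (by linarith) (Real.sqrt_pos.2 (ha.trans_lt hab))

theorem stmt_7_general (ell : ℝ → Set (ℝ × ℝ))
    (hell : ∀ a, ell a = {p : ℝ × ℝ |
      ∃ x : ℝ, -2 - a ≤ x ∧ x ≤ 1 ∧ p = (x, Real.sqrt a * (x + 2 + a))})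
    (a b : ℝ) (ha : 0 ≤ a) (hab : a < b) :
    ell a ∩ ell b = ∅ := by
  rw [hell, hell, Set.eq_empty_iff_forall_notMem]
  rintro _ ⟨⟨x, hx, -, rfl⟩, y, -, -, hxy⟩
  obtain ⟨rfl, hheight⟩ := Prod.mk.inj hxy
  exact (sqrt_mul_add_self_lt_sqrt_mul_add_self ha hab (by linarith)).ne hheight

/-- The segments `ℓ_a = {(x, √a(x+2+a)) : x ∈ [−2−a, 1]}`, `a ∈ [0,1]`, are pairwise
disjoint: if `0 ≤ a < b ≤ 1` then `ℓ_a ∩ ℓ_b = ∅`. -/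
theorem stmt_7 (ell : ℝ → Set (ℝ × ℝ))
    (hell : ∀ a, ell a = {p : ℝ × ℝ |
      ∃ x : ℝ, -2 - a ≤ x ∧ x ≤ 1 ∧ p = (x, Real.sqrt a * (x + 2 + a))})
    (a b : ℝ) (ha : 0 ≤ a) (hab : a < b) (hb : b ≤ 1) :
    ell a ∩ ell b = ∅ :=
  stmt_7_general ell hell a b ha hab
end

section
/- The union of the segments ℓ_a over a ∈ [0,1] equals the closed triangle with vertices A = (−3,0), B = (1,4), C = (1,0). -/
/-!
Writing `a = s²` with `s = √a ∈ [0, 1]`, the segment `ℓ_a` is `{(x, s (x + 2 + s²))}`. The height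
`y = s (x + 2 + s²)` is nonnegative and, since `x + 3 - y = (1 - s)(x + 3 + s + s²)`, at most
`x + 3`; so every segment lies in the triangle `0 ≤ y, x ≤ 1, y ≤ x + 3`. Conversely, for fixed `x`
the height vanishes at `s₀ = √(max 0 (-2 - x))`, the smallest admissible `s`, and equals `x + 3` at
`s = 1`, so the intermediate value theorem on `[s₀, 1]` reaches every `y ∈ [0, x + 3]`.
-/

open Set

theorem smul_add_smul_add_smul_mem_convexHull_triple {𝕜 E : Type*} [Field 𝕜] [LinearOrder 𝕜]
    [IsStrictOrderedRing 𝕜] [AddCommGroup E] [Module 𝕜 E] (A B C : E) {a b c : 𝕜}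
    (ha : 0 ≤ a) (hb : 0 ≤ b) (hc : 0 ≤ c) (habc : a + b + c = 1) :
    a • A + b • B + c • C ∈ convexHull 𝕜 {A, B, C} := by
  have := (convex_convexHull 𝕜 ({A, B, C} : Set E)).sum_mem (t := Finset.univ)
    (w := ![a, b, c]) (z := ![A, B, C]) (by simp [Fin.forall_fin_succ, *])
    (by simp [Fin.sum_univ_three, habc])
    (fun i _ => subset_convexHull 𝕜 _ (by fin_cases i <;> simp))
  simpa [Fin.sum_univ_three, add_assoc] using this

theorem convexHull_triangle_eq :
    convexHull ℝ {((-3 : ℝ), (0 : ℝ)), ((1 : ℝ), (4 : ℝ)), ((1 : ℝ), (0 : ℝ))} =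
      {p : ℝ × ℝ | 0 ≤ p.2 ∧ p.1 ≤ 1 ∧ p.2 - p.1 ≤ 3} := by
  apply Subset.antisymm
  · refine convexHull_min ?_ ?_
    · rintro p (rfl | rfl | rfl) <;> norm_num
    · exact (convex_halfSpace_ge (LinearMap.snd ℝ ℝ ℝ).isLinear 0).inter
        ((convex_halfSpace_le (LinearMap.fst ℝ ℝ ℝ).isLinear 1).inter
          (convex_halfSpace_le (LinearMap.snd ℝ ℝ ℝ - LinearMap.fst ℝ ℝ ℝ).isLinear 3))
  · rintro ⟨x, y⟩ ⟨hy, hx, hxy⟩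
    convert smul_add_smul_add_smul_mem_convexHull_triple _ _ _
      (a := (1 - x) / 4) (b := y / 4) (c := (3 + x - y) / 4)
      (by linarith) (by linarith) (by linarith) (by ring) using 1
    ext <;> simp only [Prod.smul_mk, smul_eq_mul, Prod.mk_add_mk] <;> ring

theorem sqrt_mul_mem_Icc_of_mem_segment {a x : ℝ} (ha0 : 0 ≤ a) (ha1 : a ≤ 1) (hx : -2 - a ≤ x) :
    √a * (x + 2 + a) ∈ Icc 0 (x + 3) := by
  obtain ⟨s, hs0, rfl⟩ : ∃ s, 0 ≤ s ∧ s ^ 2 = a := ⟨√a, Real.sqrt_nonneg a, Real.sq_sqrt ha0⟩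
  have hs1 : s ≤ 1 := by nlinarith
  rw [Real.sqrt_sq hs0]
  have hfactor : x + 3 - s * (x + 2 + s ^ 2) = (1 - s) * (x + 3 + s + s ^ 2) := by ring
  constructor
  · exact mul_nonneg hs0 (by linarith)
  · linarith [mul_nonneg (sub_nonneg.2 hs1) (show 0 ≤ x + 3 + s + s ^ 2 by nlinarith)]

theorem exists_sqrt_mul_eq {x y : ℝ} (hy : 0 ≤ y) (hxy : y ≤ x + 3) :
    ∃ a ∈ Icc (0 : ℝ) 1, -2 - a ≤ x ∧ √a * (x + 2 + a) = y := by
  set s₀ := √(max 0 (-2 - x))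
  have hs₀ : s₀ ^ 2 = max 0 (-2 - x) := Real.sq_sqrt (le_max_left _ _)
  have hs₀1 : s₀ ≤ 1 := Real.sqrt_le_one.2 (max_le zero_le_one (by linarith))
  have hleft : s₀ * (x + 2 + s₀ ^ 2) = 0 := by
    rcases le_total (-2 - x) 0 with h | h
    · simp [s₀, max_eq_left h]
    · rw [hs₀, max_eq_right h]; ring
  obtain ⟨s, ⟨hs₀s, hs1⟩, hs⟩ := intermediate_value_Icc hs₀1
    (f := fun s : ℝ => s * (x + 2 + s ^ 2)) (by fun_prop)
    (show y ∈ Icc (s₀ * (x + 2 + s₀ ^ 2)) (1 * (x + 2 + 1 ^ 2)) from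
      ⟨hleft ▸ hy, by linarith⟩)
  have hs0 : 0 ≤ s := (Real.sqrt_nonneg _).trans hs₀s
  refine ⟨s ^ 2, ⟨sq_nonneg s, by nlinarith⟩, ?_, by rw [Real.sqrt_sq hs0]; exact hs⟩
  nlinarith [le_max_right 0 (-2 - x), pow_le_pow_left₀ (Real.sqrt_nonneg _) hs₀s 2]

/-- The union of the segments `ℓ_a`, `a ∈ [0,1]`, equals the closed triangle with
vertices `A = (−3,0)`, `B = (1,4)`, `C = (1,0)`. -/
theorem stmt_8 (ell : ℝ → Set (ℝ × ℝ))
    (hell : ∀ a, ell a = {p : ℝ × ℝ |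
      ∃ x : ℝ, -2 - a ≤ x ∧ x ≤ 1 ∧ p = (x, Real.sqrt a * (x + 2 + a))}) :
    ⋃ a ∈ Set.Icc (0 : ℝ) 1, ell a =
      convexHull ℝ {((-3 : ℝ), (0 : ℝ)), ((1 : ℝ), (4 : ℝ)), ((1 : ℝ), (0 : ℝ))} := by
  rw [convexHull_triangle_eq]
  ext ⟨x, y⟩
  simp only [mem_iUnion, hell, mem_ofPred_eq, Prod.mk.injEq, exists_prop]
  constructor
  · rintro ⟨a, ⟨ha0, ha1⟩, x, hx, hx1, rfl, rfl⟩
    obtain ⟨hy0, hy3⟩ := sqrt_mul_mem_Icc_of_mem_segment ha0 ha1 hx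
    exact ⟨hy0, hx1, by linarith⟩
  · rintro ⟨hy, hx1, hxy⟩
    obtain ⟨a, ha, hx, rfl⟩ := exists_sqrt_mul_eq hy (by linarith)
    exact ⟨a, ha, x, hx, hx1, rfl, rfl⟩
end

section
/- The function η defined by η(y) = a(10a³ + 41a² + 54a + 27)/(54(a+1)³), where a = a(y) ∈ [0,1] is determined by y = (3+a)√a, is nonnegative on [0,4], satisfies η(y) ≤ C y² for some constant C > 0 and all y ∈ [0,1], and η(y) > 0 for y > 0. -/
/-! Everything reduces to the parameter `s = a(y) ≥ 0`: `η` is a rational function of `s`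
whose numerator is at most `27 s (s+1)³`, so `η ≤ s / 2`, while `y² = (3+s)² s ≥ 9 s`.
Hence `η(y) ≤ y² / 18`, and positivity of `η` comes from `s > 0` whenever `y > 0`. -/

namespace Eta

/-- `η` as a function of the parameter `a`. -/
noncomputable def ofParam (s : ℝ) : ℝ :=
  s * (10 * s ^ 3 + 41 * s ^ 2 + 54 * s + 27) / (54 * (s + 1) ^ 3)

variable {s y : ℝ}

theorem ofParam_nonneg (hs : 0 ≤ s) : 0 ≤ ofParam s := by
  unfold ofParam; positivity

theorem ofParam_pos (hs : 0 < s) : 0 < ofParam s := by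
  unfold ofParam; positivity

theorem ofParam_le_half (hs : 0 ≤ s) : ofParam s ≤ s / 2 := by
  unfold ofParam
  rw [div_le_div_iff₀ (by positivity) two_pos]
  nlinarith [mul_nonneg hs (mul_nonneg hs hs), mul_nonneg hs hs, mul_nonneg hs (mul_nonneg hs (mul_nonneg hs hs))]

theorem sq_eq_of_mul_sqrt_eq (hs : 0 ≤ s) (h : (3 + s) * √s = y) : y ^ 2 = (3 + s) ^ 2 * s := by
  rw [← h, mul_pow, Real.sq_sqrt hs]

theorem nine_mul_le_sq (hs : 0 ≤ s) (h : (3 + s) * √s = y) : 9 * s ≤ y ^ 2 := by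
  rw [sq_eq_of_mul_sqrt_eq hs h]
  nlinarith [mul_nonneg hs hs, mul_nonneg hs (mul_nonneg hs hs)]

theorem pos_of_mul_sqrt_eq (hs : 0 ≤ s) (h : (3 + s) * √s = y) (hy : 0 < y) : 0 < s := by
  have : 0 < (3 + s) ^ 2 * s := sq_eq_of_mul_sqrt_eq hs h ▸ pow_pos hy 2
  exact pos_of_mul_pos_right this (by positivity)

end Eta

/-- With `a(y) ∈ [0,1]` the unique solution of `y = (3+a)√a` for `y ∈ [0,4]`, the
function `η(y) = a(10a³+41a²+54a+27)/(54(a+1)³)` is nonnegative on `[0,4]`,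
satisfies `η(y) ≤ C y²` on `[0,1]` for some `C > 0`, and is positive for `y > 0`. -/
theorem stmt_12 (a : ℝ → ℝ)
    (ha : ∀ y ∈ Set.Icc (0 : ℝ) 4,
      a y ∈ Set.Icc (0 : ℝ) 1 ∧ (3 + a y) * Real.sqrt (a y) = y)
    (η : ℝ → ℝ)
    (hη : ∀ y, η y = a y * (10 * a y ^ 3 + 41 * a y ^ 2 + 54 * a y + 27) /
      (54 * (a y + 1) ^ 3)) :
    (∀ y ∈ Set.Icc (0 : ℝ) 4, 0 ≤ η y) ∧
    (∃ C > (0 : ℝ), ∀ y ∈ Set.Icc (0 : ℝ) 1, η y ≤ C * y ^ 2) ∧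
    (∀ y ∈ Set.Ioc (0 : ℝ) 4, 0 < η y) := by
  have hη' : ∀ y, η y = Eta.ofParam (a y) := hη
  refine ⟨fun y hy => ?_, ⟨1 / 18, by norm_num, fun y hy => ?_⟩, fun y hy => ?_⟩
  · rw [hη']
    exact Eta.ofParam_nonneg (ha y hy).1.1
  · obtain ⟨⟨hs, -⟩, hy_eq⟩ := ha y ⟨hy.1, hy.2.trans (by norm_num)⟩
    have := Eta.nine_mul_le_sq hs hy_eq
    rw [hη']
    linarith [Eta.ofParam_le_half hs]
  · obtain ⟨⟨hs, -⟩, hy_eq⟩ := ha y (Set.Ioc_subset_Icc_self hy)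
    rw [hη']
    exact Eta.ofParam_pos (Eta.pos_of_mul_sqrt_eq hs hy_eq hy.1)
end

section
/- With η as defined, the mass balance identity (1/24)a^{3/2}(3+a)² = ∫_{−2−a}^{1} ∫_0^{√a(x+2+a)} η(y) dy dx holds for all a ∈ [0,1]; equivalently, ∫_{Δ_{P_a C Q_a}} 1 dx dy = ∫_{Δ_{P_a C Q_a}} (1 + x/4 + η(y)) dx dy, where Δ_{P_a C Q_a} is the triangle with vertices P_a = (−2−a, 0), C = (1,0), Q_a = (1, (3+a)√a). -/
/-!
Substituting `y = (3 + u²) u`, i.e. `u = √(a y)`, turns `η y dy` into a rational function of `u`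
times `du`, so `∫₀^Y η = etaPrimitive (√(a Y))`. The affine change `x ↦ √a (x + 2 + a)` maps
`[-2 - a, 1]` onto `[0, (3 + a) √a]`, and the same substitution integrates `etaPrimitive` against
`dy` to the polynomial `massPrimitive u = u⁴ (u² + 3)² / 24`; at `u = √a`, divided by the
Jacobian `√a` of the affine change, this is `a^{3/2} (3 + a)² / 24`.
-/

open Real Set intervalIntegral

/-- The height `(3 + a) √a` of `Q_a` in the variable `u = √a`: a polynomial with positive
derivative, so substituting along it needs no regularity of the inverse `a(y)`. -/
def qHeight (u : ℝ) : ℝ := (3 + u ^ 2) * u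

lemma hasDerivAt_qHeight (u : ℝ) : HasDerivAt qHeight (3 * (1 + u ^ 2)) u := by
  refine ((hasDerivAt_pow 2 u).const_add 3 |>.fun_mul (hasDerivAt_id u)).congr_deriv ?_
  simp only [id]
  ring

lemma qHeight_strictMono : StrictMono qHeight := fun u v huv => by
  simp only [qHeight]
  nlinarith [sq_nonneg (u + v), sq_nonneg u, sq_nonneg v]

lemma qHeight_mem_Icc {u : ℝ} (hu : u ∈ Icc (0 : ℝ) 1) : qHeight u ∈ Icc (0 : ℝ) 4 := by
  obtain ⟨h0, h1⟩ := hu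
  constructor <;> simp only [qHeight] <;> nlinarith [mul_nonneg h0 h0]

lemma sq_eq_of_mul_sqrt_eq_qHeight {t u : ℝ} (ht : 0 ≤ t) (h : (3 + t) * √t = qHeight u) :
    t = u ^ 2 := by
  have hsqrt : qHeight √t = qHeight u := by rw [qHeight, sq_sqrt ht, h]
  rw [← qHeight_strictMono.injective hsqrt, sq_sqrt ht]

lemma integral_zero_qHeight_eq_sub {f p P : ℝ → ℝ}
    (hP : ∀ u, HasDerivAt P (3 * (1 + u ^ 2) * p u) u) (hp : Continuous p)
    (hfp : ∀ u ∈ Icc (0 : ℝ) 1, f (qHeight u) = p u) {v : ℝ} (hv : v ∈ Icc (0 : ℝ) 1) :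
    ∫ y in 0..qHeight v, f y = P v - P 0 := by
  have hq0 : qHeight 0 = 0 := by simp [qHeight]
  calc ∫ y in 0..qHeight v, f y = ∫ u in 0..v, (3 * (1 + u ^ 2)) • (f ∘ qHeight) u := by
        rw [integral_deriv_smul_comp_of_deriv_nonneg (f' := fun u => 3 * (1 + u ^ 2))
          (fun u _ => (hasDerivAt_qHeight u).continuousAt.continuousWithinAt)
          (fun u _ => hasDerivAt_qHeight u) (fun u _ => by positivity), hq0]
    _ = ∫ u in 0..v, 3 * (1 + u ^ 2) * p u := by
        refine integral_congr fun u hu => ?_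
        rw [uIcc_of_le hv.1] at hu
        rw [smul_eq_mul, Function.comp_apply, hfp u ⟨hu.1, hu.2.trans hv.2⟩]
    _ = P v - P 0 :=
        integral_eq_sub_of_hasDerivAt (fun u _ => hP u)
          (Continuous.intervalIntegrable (by fun_prop) _ _)

noncomputable def etaProfile (t : ℝ) : ℝ :=
  t * (10 * t ^ 3 + 41 * t ^ 2 + 54 * t + 27) / (54 * (t + 1) ^ 3)

noncomputable def etaPrimitive (u : ℝ) : ℝ :=
  u ^ 3 * (2 * u ^ 4 + 9 * u ^ 2 + 9) / (18 * (u ^ 2 + 1))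

noncomputable def massPrimitive (u : ℝ) : ℝ := u ^ 4 * (u ^ 2 + 3) ^ 2 / 24

lemma hasDerivAt_etaPrimitive (u : ℝ) :
    HasDerivAt etaPrimitive (3 * (1 + u ^ 2) * etaProfile (u ^ 2)) u := by
  have hden : (18 : ℝ) * (u ^ 2 + 1) ≠ 0 := by positivity
  have h := (hasDerivAt_pow 3 u).fun_mul
    (((hasDerivAt_pow 4 u).const_mul 2).fun_add ((hasDerivAt_pow 2 u).const_mul 9) |>.add_const 9)
    |>.fun_div ((hasDerivAt_pow 2 u |>.add_const 1).const_mul 18) hden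
  refine h.congr_deriv ?_
  simp only [etaProfile]
  field_simp
  ring

lemma hasDerivAt_massPrimitive (u : ℝ) :
    HasDerivAt massPrimitive (3 * (1 + u ^ 2) * etaPrimitive u) u := by
  have h := (hasDerivAt_pow 4 u).fun_mul ((hasDerivAt_pow 2 u |>.add_const 3).fun_pow 2)
    |>.div_const 24
  refine h.congr_deriv ?_
  simp only [etaPrimitive]
  field_simp
  ring

lemma continuous_etaProfile_sq : Continuous fun u : ℝ => etaProfile (u ^ 2) :=
  Continuous.div (by fun_prop) (by fun_prop) fun u => by positivity

lemma continuous_etaPrimitive : Continuous etaPrimitive :=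
  Continuous.div (by fun_prop) (by fun_prop) fun u => by positivity

/-- Mass balance: with `η` built from the inverse `a(y)` of `a ↦ (3+a)√a`,
`(1/24)a^{3/2}(3+a)² = ∫_{−2−a}^{1} ∫_0^{√a(x+2+a)} η(y) dy dx` for all `a ∈ [0,1]`. -/
theorem stmt_13 (a : ℝ → ℝ)
    (ha : ∀ y ∈ Set.Icc (0 : ℝ) 4,
      a y ∈ Set.Icc (0 : ℝ) 1 ∧ (3 + a y) * Real.sqrt (a y) = y)
    (η : ℝ → ℝ)
    (hη : ∀ y, η y = a y * (10 * a y ^ 3 + 41 * a y ^ 2 + 54 * a y + 27) /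
      (54 * (a y + 1) ^ 3)) :
    ∀ s ∈ Set.Icc (0 : ℝ) 1,
      (1 / 24) * s ^ ((3 : ℝ) / 2) * (3 + s) ^ 2 =
        ∫ x in (-2 - s)..1, ∫ y in (0 : ℝ)..(Real.sqrt s * (x + 2 + s)), η y := by
  intro s hs
  have ha_qHeight (u : ℝ) (hu : u ∈ Icc (0 : ℝ) 1) : a (qHeight u) = u ^ 2 :=
    have ha_u := ha _ (qHeight_mem_Icc hu)
    sq_eq_of_mul_sqrt_eq_qHeight ha_u.1.1 ha_u.2
  have hinner (u : ℝ) (hu : u ∈ Icc (0 : ℝ) 1) :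
      ∫ y in 0..qHeight u, η y = etaPrimitive u := by
    simpa [etaPrimitive] using integral_zero_qHeight_eq_sub hasDerivAt_etaPrimitive
      continuous_etaProfile_sq (fun u hu => by rw [hη, ha_qHeight u hu]; rfl) hu
  obtain rfl | hs0 := hs.1.eq_or_lt
  · simp
  set v := √s with hv
  have hv0 : 0 < v := sqrt_pos.2 hs0
  have hsv : s = v ^ 2 := (sq_sqrt hs.1).symm
  have hv1 : v ∈ Icc (0 : ℝ) 1 := ⟨hv0.le, sqrt_le_one.2 hs.2⟩
  have houter : ∫ y in 0..qHeight v, ∫ z in 0..y, η z = massPrimitive v := by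
    simpa [massPrimitive] using integral_zero_qHeight_eq_sub hasDerivAt_massPrimitive
      continuous_etaPrimitive hinner hv1
  have hsub := integral_comp_mul_add (a := -2 - s) (b := 1)
    (fun y => ∫ z in 0..y, η z) hv0.ne' (v * (2 + s))
  have hlo : v * (-2 - s) + v * (2 + s) = 0 := by ring
  have hhi : v * 1 + v * (2 + s) = qHeight v := by rw [qHeight, hsv]; ring
  rw [hlo, hhi, houter] at hsub
  calc (1 / 24) * s ^ ((3 : ℝ) / 2) * (3 + s) ^ 2 = v⁻¹ • massPrimitive v := by
        have hpow : s ^ ((3 : ℝ) / 2) = v ^ 3 := by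
          rw [hv, sqrt_eq_rpow, ← rpow_mul_natCast hs.1]
          norm_num
        rw [hpow, smul_eq_mul, massPrimitive, ← hsv]
        field_simp
        ring
    _ = _ := by
        rw [← hsub]
        exact integral_congr fun x _ => by ring_nf
end

section
/- Let a(x,y) be implicitly defined on the open triangle (interior of Δ_{ABC}) minus the x-axis by y = √a (a+2+x), and set ν(x,y) = −(1, √a)/√(1+a). Then ν is a unit vector field and ∂_y ν₁ − ∂_x ν₂ = 0 wherever a(x,y) ≠ 0; consequently ν is (locally) a gradient: there exists u with Du = ν. -/
open Real Filter Topology Set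

/-!
Along a vertical line `a` inverts `b ↦ √b (b + 2 + x)`, along a horizontal line it inverts
`b ↦ y / √b - b - 2`; both are strictly monotone with nonvanishing derivative, so the inverse
function theorem gives `a_y = 2√a / (3a + 2 + x)` and `a_x = -2a / (3a + 2 + x)`. With these,
`u = -√(1 + a) (a + x)` satisfies `Du = ν`, and `∂_y ν₁ = ∂_x ν₂` is a direct computation.
-/

/-- Unlike `HasDerivAt.of_local_left_inverse`, continuity of `g` is not assumed: injectivity of
`f` near `g t₀` forces `g` to coincide with the local inverse of `f`. -/
theorem HasStrictDerivAt.hasDerivAt_of_local_left_inverse_of_injOn {𝕜 : Type*}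
    [NontriviallyNormedField 𝕜] [CompleteSpace 𝕜] {f g : 𝕜 → 𝕜} {f' t₀ : 𝕜} {U : Set 𝕜}
    (hf : HasStrictDerivAt f f' (g t₀)) (hf' : f' ≠ 0) (hU : U ∈ 𝓝 (g t₀)) (hinj : InjOn f U)
    (hfg : ∀ᶠ t in 𝓝 t₀, g t ∈ U ∧ f (g t) = t) : HasDerivAt g f'⁻¹ t₀ := by
  have hfg₀ : f (g t₀) = t₀ := hfg.self_of_nhds.2
  have hgf : ∀ᶠ b in 𝓝 (g t₀), g (f b) = b := by
    have hfg' := hf.hasDerivAt.continuousAt.tendsto.eventually (hfg₀ ▸ hfg)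
    filter_upwards [hfg', hU] with b ⟨hgU, hfgb⟩ hb using hinj hgU hb hfgb
  simpa only [hfg₀] using (hf.to_local_left_inverse hf' hgf).hasDerivAt

theorem hasDerivAt_implicit_snd {α : ℝ → ℝ} {x y : ℝ}
    (hα : ∀ᶠ t in 𝓝 y, 0 < α t ∧ 0 < α t + 2 + x ∧ t = √(α t) * (α t + 2 + x)) :
    HasDerivAt α (2 * √(α y) / (3 * α y + 2 + x)) y := by
  obtain ⟨hA, hAx, -⟩ := hα.self_of_nhds
  have hf : HasStrictDerivAt (fun b => √b * (b + 2 + x)) ((3 * α y + 2 + x) / (2 * √(α y)))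
      (α y) := by
    refine ((hasStrictDerivAt_sqrt hA.ne').mul
      (((hasStrictDerivAt_id _).add_const 2).add_const x)).congr_deriv ?_
    field_simp
    rw [sq_sqrt hA.le]
    ring
  have hU : {b : ℝ | 0 < b ∧ 0 < b + 2 + x} ∈ 𝓝 (α y) :=
    ((isOpen_lt continuous_const continuous_id).inter (isOpen_lt continuous_const
      ((continuous_add_const 2).add continuous_const))).mem_nhds ⟨hA, hAx⟩
  have hmono : StrictMonoOn (fun b => √b * (b + 2 + x)) {b : ℝ | 0 < b ∧ 0 < b + 2 + x} :=
    fun b hb c _ hbc => mul_lt_mul'' (sqrt_lt_sqrt hb.1.le hbc) (by linarith) (sqrt_nonneg b)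
      hb.2.le
  refine (hf.hasDerivAt_of_local_left_inverse_of_injOn (div_pos (by linarith) (by positivity)).ne'
    hU hmono.injOn (hα.mono fun t ⟨h0, hx, ht⟩ => ⟨⟨h0, hx⟩, ht.symm⟩)).congr_deriv ?_
  rw [inv_div]

theorem hasDerivAt_implicit_fst {β : ℝ → ℝ} {x y : ℝ} (hy : 0 < y)
    (hβ : ∀ᶠ t in 𝓝 x, 0 < β t ∧ y = √(β t) * (β t + 2 + t)) :
    HasDerivAt β (-(2 * β x) / (3 * β x + 2 + x)) x := by
  obtain ⟨hA, hyA⟩ := hβ.self_of_nhds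
  have hsA : 0 < √(β x) := sqrt_pos.2 hA
  have hAx : 0 < β x + 2 + x := by nlinarith
  have hf : HasStrictDerivAt (fun b => y / √b - b - 2) (-((3 * β x + 2 + x) / (2 * β x)))
      (β x) := by
    refine ((((hasStrictDerivAt_const _ y).div (hasStrictDerivAt_sqrt hA.ne') hsA.ne').sub
      (hasStrictDerivAt_id _)).sub (hasStrictDerivAt_const _ 2)).congr_deriv ?_
    rw [hyA]
    field_simp
    rw [sq_sqrt hA.le]
    ring
  have hanti : StrictAntiOn (fun b => y / √b - b - 2) (Ioi 0) := fun b hb c _ hbc => by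
    have hdiv := div_lt_div_of_pos_left hy (sqrt_pos.2 hb) (sqrt_lt_sqrt (le_of_lt hb) hbc)
    simp only
    linarith
  have hinv : ∀ {t B : ℝ}, 0 < B → y = √B * (B + 2 + t) → y / √B - B - 2 = t := by
    intro t B hB h
    rw [h]
    field_simp [(sqrt_pos.2 hB).ne']
    ring
  refine (hf.hasDerivAt_of_local_left_inverse_of_injOn
    (neg_ne_zero.2 (div_pos (by linarith) (by positivity)).ne') (Ioi_mem_nhds hA)
    hanti.injOn (hβ.mono fun t ⟨h0, ht⟩ => ⟨h0, hinv h0 ht⟩)).congr_deriv ?_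
  rw [inv_neg, inv_div, neg_div]

theorem hasDerivAt_potential_fst {β : ℝ → ℝ} {x : ℝ}
    (hβ : HasDerivAt β (-(2 * β x) / (3 * β x + 2 + x)) x) (hA : 0 < β x)
    (hAx : 0 < β x + 2 + x) :
    HasDerivAt (fun t => -(√(1 + β t) * (β t + t))) (-(1 / √(1 + β x))) x := by
  have h1A : 0 < 1 + β x := by linarith
  have hlin : HasDerivAt (fun t => β t + t) (-(2 * β x) / (3 * β x + 2 + x) + 1) x :=
    hβ.add (hasDerivAt_id' x)
  refine ((((hβ.const_add 1).sqrt h1A.ne').mul hlin).neg).congr_deriv ?_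
  have hc : 3 * β x + 2 + x ≠ 0 := by linarith
  field_simp
  rw [sq_sqrt h1A.le]
  linear_combination β x * mul_inv_cancel₀ hc

theorem hasDerivAt_potential_snd {α : ℝ → ℝ} {x y : ℝ}
    (hα : HasDerivAt α (2 * √(α y) / (3 * α y + 2 + x)) y) (hA : 0 < α y)
    (hAx : 0 < α y + 2 + x) :
    HasDerivAt (fun t => -(√(1 + α t) * (α t + x))) (-(√(α y) / √(1 + α y))) y := by
  have h1A : 0 < 1 + α y := by linarith
  refine ((((hα.const_add 1).sqrt h1A.ne').mul (hα.add_const x)).neg).congr_deriv ?_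
  have hc : 3 * α y + 2 + x ≠ 0 := by linarith
  field_simp
  rw [sq_sqrt h1A.le]
  ring

theorem deriv_neg_inv_sqrt_eq_deriv_neg_sqrt_div_sqrt {α β : ℝ → ℝ} {x y : ℝ}
    (hα : HasDerivAt α (2 * √(α y) / (3 * α y + 2 + x)) y)
    (hβ : HasDerivAt β (-(2 * β x) / (3 * β x + 2 + x)) x) (hαβ : α y = β x) (hA : 0 < β x)
    (hAx : 0 < β x + 2 + x) :
    deriv (fun t => -(1 / √(1 + α t))) y = deriv (fun t => -(√(β t) / √(1 + β t))) x := by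
  have h1A : 0 < 1 + β x := by linarith
  have hs1 : 0 < √(1 + β x) := sqrt_pos.2 h1A
  have hν₁ : HasDerivAt (fun t => -(1 / √(1 + α t))) _ y :=
    ((hasDerivAt_const y 1).div ((hα.const_add 1).sqrt (hαβ ▸ h1A).ne') (hαβ ▸ hs1).ne').neg
  have hν₂ : HasDerivAt (fun t => -(√(β t) / √(1 + β t))) _ x :=
    ((hβ.sqrt hA.ne').div ((hβ.const_add 1).sqrt h1A.ne') hs1.ne').neg
  rw [hν₁.deriv, hν₂.deriv, hαβ]
  field_simp
  rw [sq_sqrt h1A.le]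
  linear_combination ((1 + β x) / (3 * β x + 2 + x)) * sq_sqrt hA.le

/-- With `a(x,y)` implicitly defined on the open triangle minus the x-axis by
`y = √a (a+2+x)` and `ν = −(1,√a)/√(1+a)`, the field `ν` is a unit vector field with
`∂_y ν₁ − ∂_x ν₂ = 0`, and `ν` is a gradient: there is `u` with `Du = ν` there. -/
theorem stmt_17 (S : Set (ℝ × ℝ))
    (hS : S = interior (convexHull ℝ
        {((-3 : ℝ), (0 : ℝ)), ((1 : ℝ), (4 : ℝ)), ((1 : ℝ), (0 : ℝ))}) \
      {p : ℝ × ℝ | p.2 = 0})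
    (a : ℝ × ℝ → ℝ)
    (ha : ∀ p ∈ S, a p ∈ Set.Ioc (0 : ℝ) 1 ∧
      p.2 = Real.sqrt (a p) * (a p + 2 + p.1))
    (ν : ℝ × ℝ → ℝ × ℝ)
    (hν : ∀ p, ν p = (-(1 / Real.sqrt (1 + a p)),
      -(Real.sqrt (a p) / Real.sqrt (1 + a p)))) :
    (∀ p ∈ S, (ν p).1 ^ 2 + (ν p).2 ^ 2 = 1) ∧
    (∀ p ∈ S, deriv (fun t => (ν (p.1, t)).1) p.2 = deriv (fun t => (ν (t, p.2)).2) p.1) ∧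
    (∃ u : ℝ × ℝ → ℝ, ∀ p ∈ S,
      HasDerivAt (fun t => u (t, p.2)) ((ν p).1) p.1 ∧
      HasDerivAt (fun t => u (p.1, t)) ((ν p).2) p.2) := by
  have hSopen : IsOpen S := hS ▸ isOpen_interior.sdiff (isClosed_eq continuous_snd continuous_const)
  have hpos : ∀ p ∈ S, 0 < p.2 := by
    intro p hp
    rw [hS] at hp
    have hhull : convexHull ℝ {((-3 : ℝ), (0 : ℝ)), ((1 : ℝ), (4 : ℝ)), ((1 : ℝ), (0 : ℝ))} ⊆
        {q : ℝ × ℝ | 0 ≤ q.2} :=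
      convexHull_min (by simp [insert_subset_iff])
        (convex_halfSpace_ge (LinearMap.snd ℝ ℝ ℝ).isLinear 0)
    exact (hhull (interior_subset hp.1)).lt_of_ne' hp.2
  have hrel : ∀ p ∈ S, 0 < a p ∧ 0 < a p + 2 + p.1 ∧ p.2 = √(a p) * (a p + 2 + p.1) := by
    intro p hp
    obtain ⟨⟨hA, -⟩, heq⟩ := ha p hp
    exact ⟨hA, pos_of_mul_pos_right (heq ▸ hpos p hp) (sqrt_nonneg _), heq⟩
  have hdy : ∀ p ∈ S, HasDerivAt (fun t => a (p.1, t)) (2 * √(a p) / (3 * a p + 2 + p.1)) p.2 :=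
    fun p hp => hasDerivAt_implicit_snd <|
      ((continuous_const.prodMk continuous_id).continuousAt.eventually_mem
        (hSopen.mem_nhds hp)).mono fun t ht => hrel _ ht
  have hdx : ∀ p ∈ S, HasDerivAt (fun t => a (t, p.2)) (-(2 * a p) / (3 * a p + 2 + p.1)) p.1 :=
    fun p hp => hasDerivAt_implicit_fst (hpos p hp) <|
      ((continuous_id.prodMk continuous_const).continuousAt.eventually_mem
        (hSopen.mem_nhds hp)).mono fun t ht => ⟨(hrel _ ht).1, (hrel _ ht).2.2⟩
  refine ⟨fun p hp => ?_, fun p hp => ?_,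
    ⟨fun q => -(√(1 + a q) * (a q + q.1)), fun p hp => ⟨?_, ?_⟩⟩⟩ <;>
    obtain ⟨hA, hAx, -⟩ := hrel p hp <;> simp only [hν]
  · have h1A : 0 < 1 + a p := by linarith
    field_simp
    rw [sq_sqrt h1A.le, sq_sqrt hA.le]
  · exact deriv_neg_inv_sqrt_eq_deriv_neg_sqrt_div_sqrt (hdy p hp) (hdx p hp) rfl hA hAx
  · exact hasDerivAt_potential_fst (hdx p hp) hA hAx
  · exact hasDerivAt_potential_snd (hdy p hp) hA hAx
end

section
/- There exists a function u : Δ_{ABC} → ℝ with |u(p) − u(q)| ≤ |p − q| for all p, q ∈ Δ_{ABC}, and equality holds if and only if p and q lie on a common segment ℓ_a; namely, the function with gradient Du(x,y) = −(1,√a(x,y))/√(1+a(x,y)) along every ℓ_a. -/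
/-!
The function `lineFn a` is affine with unit gradient `-(1, √a)/√(1+a)`, hence 1-Lipschitz, and on
`ℓ_a` it equals `-(x + a)√(1+a)`, so it varies at unit speed along `ℓ_a`. A Cauchy–Schwarz
computation shows `lineFn a < lineFn b` on `ℓ_a` for every `b ≠ a`. Hence `u p = lineFn (a p) p`
is the lower envelope of the family `lineFn b`, `b ∈ [0, 1]`, and is 1-Lipschitz. If
`u p - u q = |p - q|`, the chain `u p ≤ lineFn (a q) p ≤ u q + |p - q|` is tight, so `a q` is
also the minimiser at `p`, that is `a p = a q`.
-/

open Set

namespace LowerEnvelope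

def seg (a : ℝ) : Set (ℝ × ℝ) :=
  {p : ℝ × ℝ | ∃ x : ℝ, -2 - a ≤ x ∧ x ≤ 1 ∧ p = (x, Real.sqrt a * (x + 2 + a))}

def triangle : Set (ℝ × ℝ) :=
  convexHull ℝ {((-3 : ℝ), (0 : ℝ)), ((1 : ℝ), (4 : ℝ)), ((1 : ℝ), (0 : ℝ))}

noncomputable def euclDist (p q : ℝ × ℝ) : ℝ :=
  √((p.1 - q.1) ^ 2 + (p.2 - q.2) ^ 2)

noncomputable def lineFn (a : ℝ) (p : ℝ × ℝ) : ℝ :=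
  (a - p.1 - √a * p.2) / √(1 + a)

lemma euclDist_comm (p q : ℝ × ℝ) : euclDist p q = euclDist q p := by
  unfold euclDist; ring_nf

lemma lineFn_sub_le {a : ℝ} (ha : 0 ≤ a) (p q : ℝ × ℝ) :
    lineFn a p - lineFn a q ≤ euclDist p q := by
  have hr : 0 < √(1 + a) := Real.sqrt_pos.2 (by linarith)
  have hdiff : lineFn a p - lineFn a q = (-(p.1 - q.1) - √a * (p.2 - q.2)) / √(1 + a) := by
    unfold lineFn; field_simp; ring
  rw [hdiff, div_le_iff₀ hr, euclDist, ← Real.sqrt_mul (by positivity)]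
  refine (le_abs_self _).trans (Real.abs_le_sqrt ?_)
  have hsq : √a ^ 2 = a := Real.sq_sqrt ha
  nlinarith [sq_nonneg (√a * (p.1 - q.1) - (p.2 - q.2))]

lemma lineFn_of_mem_seg {a : ℝ} (ha : 0 ≤ a) {p : ℝ × ℝ} (hp : p ∈ seg a) :
    lineFn a p = -(p.1 + a) * √(1 + a) := by
  obtain ⟨x, -, -, rfl⟩ := hp
  have hr : 0 < √(1 + a) := Real.sqrt_pos.2 (by linarith)
  have hr2 : √(1 + a) ^ 2 = 1 + a := Real.sq_sqrt (by linarith)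
  unfold lineFn
  rw [div_eq_iff hr.ne']
  linear_combination (x + a) * hr2 - (x + 2 + a) * Real.sq_sqrt ha

lemma euclDist_of_mem_seg {a : ℝ} (ha : 0 ≤ a) {p q : ℝ × ℝ} (hp : p ∈ seg a) (hq : q ∈ seg a) :
    euclDist p q = |p.1 - q.1| * √(1 + a) := by
  obtain ⟨x, -, -, rfl⟩ := hp
  obtain ⟨y, -, -, rfl⟩ := hq
  rw [euclDist, ← Real.sqrt_sq_eq_abs, ← Real.sqrt_mul (sq_nonneg _)]
  congr 1
  linear_combination (x - y) ^ 2 * Real.sq_sqrt ha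

lemma abs_lineFn_sub_of_mem_seg {a : ℝ} (ha : 0 ≤ a) {p q : ℝ × ℝ}
    (hp : p ∈ seg a) (hq : q ∈ seg a) :
    |lineFn a p - lineFn a q| = euclDist p q := by
  rw [lineFn_of_mem_seg ha hp, lineFn_of_mem_seg ha hq, euclDist_of_mem_seg ha hp hq,
    show -(p.1 + a) * √(1 + a) - -(q.1 + a) * √(1 + a) = -((p.1 - q.1) * √(1 + a)) by ring,
    abs_neg, abs_mul, abs_of_nonneg (Real.sqrt_nonneg _)]

/-- With `c = t r - (1 + m s)`, Cauchy–Schwarz says `c (c + 2 (1 + m s)) = (s - m)^2`. -/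
lemma sq_sub_add_mul_gap_pos {m s t r y : ℝ} (hm : 0 ≤ m) (hs : 0 ≤ s) (ht : 0 ≤ t) (hr : 0 ≤ r)
    (ht2 : t ^ 2 = 1 + s ^ 2) (hr2 : r ^ 2 = 1 + m ^ 2) (hsm : s ≠ m) (hy : -2 ≤ y) :
    0 < (s - m) ^ 2 + y * (t * r - 1 - m * s) := by
  set c := t * r - 1 - m * s with hc
  have hgap : c * (c + 2 * (1 + m * s)) = (s - m) ^ 2 := by
    rw [hc]; linear_combination r ^ 2 * ht2 + (1 + s ^ 2) * hr2
  have hsm2 : 0 < (s - m) ^ 2 := by positivity [sub_ne_zero.2 hsm]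
  have hc0 : 0 < c := by
    have : 0 < c + 2 * (1 + m * s) := by nlinarith [mul_nonneg ht hr, mul_nonneg hm hs]
    exact pos_of_mul_pos_left (hgap ▸ hsm2) this.le
  nlinarith [mul_le_mul_of_nonneg_right hy hc0.le, mul_pos hc0 hc0,
    mul_nonneg hc0.le (mul_nonneg hm hs)]

lemma lineFn_lt_of_mem_seg {a b : ℝ} (ha : 0 ≤ a) (hb : 0 ≤ b) (hab : a ≠ b) {p : ℝ × ℝ}
    (hp : p ∈ seg a) : lineFn a p < lineFn b p := by
  rw [lineFn_of_mem_seg ha hp]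
  obtain ⟨x, hx, -, rfl⟩ := hp
  have ht : 0 < √(1 + b) := Real.sqrt_pos.2 (by linarith)
  have hsm : √b ≠ √a := fun h => hab ((Real.sqrt_inj ha hb).1 h.symm)
  -- the numerator of `lineFn b p - lineFn a p`, with `m, s, t, r = √a, √b, √(1+b), √(1+a)`
  have hgap := sq_sub_add_mul_gap_pos (r := √(1 + a)) (y := x + a) (Real.sqrt_nonneg a)
    (Real.sqrt_nonneg b) ht.le (Real.sqrt_nonneg _)
    (by rw [Real.sq_sqrt hb, Real.sq_sqrt (by linarith)])
    (by rw [Real.sq_sqrt ha, Real.sq_sqrt (by linarith)]) hsm (by linarith)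
  unfold lineFn
  rw [lt_div_iff₀ ht]
  dsimp only
  linear_combination hgap + Real.sq_sqrt hb + Real.sq_sqrt ha

lemma lineFn_le_of_mem_seg {a b : ℝ} (ha : 0 ≤ a) (hb : 0 ≤ b) {p : ℝ × ℝ}
    (hp : p ∈ seg a) : lineFn a p ≤ lineFn b p := by
  rcases eq_or_ne a b with rfl | hab
  · exact le_rfl
  · exact (lineFn_lt_of_mem_seg ha hb hab hp).le

lemma eq_of_mem_seg_of_mem_seg {a b : ℝ} (ha : 0 ≤ a) (hb : 0 ≤ b) {p : ℝ × ℝ}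
    (hpa : p ∈ seg a) (hpb : p ∈ seg b) : a = b := by
  by_contra hab
  exact (lineFn_lt_of_mem_seg ha hb hab hpa).not_ge (lineFn_le_of_mem_seg hb ha hpb)

lemma triangle_subset :
    triangle ⊆ {p : ℝ × ℝ | 0 ≤ p.2 ∧ p.1 ≤ 1 ∧ p.2 ≤ p.1 + 3} := by
  refine convexHull_min ?_ ?_
  · rintro q (rfl | rfl | rfl) <;> norm_num
  · intro u hu v hv α β hα hβ hαβ
    obtain ⟨hu1, hu2, hu3⟩ := hu
    obtain ⟨hv1, hv2, hv3⟩ := hv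
    simp only [mem_ofPred_eq, Prod.fst_add, Prod.snd_add, Prod.smul_fst, Prod.smul_snd,
      smul_eq_mul]
    refine ⟨by positivity, ?_, ?_⟩ <;> nlinarith

/-- For fixed `x`, the height `√a (x + 2 + a)` of `ℓ_a` rises continuously from `0` at
`a = max 0 (-2 - x)` to `x + 3` at `a = 1`. -/
lemma exists_mem_seg {p : ℝ × ℝ} (hp : p ∈ triangle) : ∃ a ∈ Icc (0 : ℝ) 1, p ∈ seg a := by
  obtain ⟨x, y⟩ := p
  obtain ⟨hy0, hx1, hy3⟩ := triangle_subset hp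
  dsimp only at hy0 hx1 hy3
  set a₀ := max 0 (-2 - x)
  have ha₀ : a₀ ≤ 1 := max_le zero_le_one (by linarith)
  have hcont : ContinuousOn (fun a : ℝ => √a * (x + 2 + a)) (Icc a₀ 1) := by fun_prop
  have hstart : √a₀ * (x + 2 + a₀) = 0 := by
    rcases le_total (-2 - x) 0 with h | h
    · simp [a₀, max_eq_left h]
    · simp only [a₀, max_eq_right h]; ring
  obtain ⟨a, ha, hya⟩ := intermediate_value_Icc ha₀ hcont
    (show y ∈ Icc (√a₀ * (x + 2 + a₀)) (√1 * (x + 2 + 1)) by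
      rw [hstart, Real.sqrt_one]; constructor <;> linarith)
  refine ⟨a, ⟨(le_max_left _ _).trans ha.1, ha.2⟩, x, ?_, hx1, by rw [← hya]⟩
  linarith [le_max_right 0 (-2 - x), ha.1]

noncomputable def segIndex (p : ℝ × ℝ) : ℝ :=
  Classical.epsilon fun a => a ∈ Icc (0 : ℝ) 1 ∧ p ∈ seg a

noncomputable def envelope (p : ℝ × ℝ) : ℝ :=
  lineFn (segIndex p) p

lemma segIndex_spec {p : ℝ × ℝ} (hp : p ∈ triangle) :
    segIndex p ∈ Icc (0 : ℝ) 1 ∧ p ∈ seg (segIndex p) :=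
  Classical.epsilon_spec (p := fun a => a ∈ Icc (0 : ℝ) 1 ∧ p ∈ seg a)
    (by simpa only [exists_prop] using exists_mem_seg hp)

lemma segIndex_eq {p : ℝ × ℝ} (hp : p ∈ triangle) {a : ℝ} (ha : 0 ≤ a) (hpa : p ∈ seg a) :
    segIndex p = a :=
  eq_of_mem_seg_of_mem_seg (segIndex_spec hp).1.1 ha (segIndex_spec hp).2 hpa

lemma envelope_le_lineFn {p : ℝ × ℝ} (hp : p ∈ triangle) {b : ℝ} (hb : 0 ≤ b) :
    envelope p ≤ lineFn b p :=
  lineFn_le_of_mem_seg (segIndex_spec hp).1.1 hb (segIndex_spec hp).2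

lemma envelope_sub_le {p q : ℝ × ℝ} (hp : p ∈ triangle) (hq : q ∈ triangle) :
    envelope p - envelope q ≤ euclDist p q := by
  have hq0 := (segIndex_spec hq).1.1
  calc envelope p - envelope q ≤ lineFn (segIndex q) p - lineFn (segIndex q) q :=
        sub_le_sub_right (envelope_le_lineFn hp hq0) _
    _ ≤ euclDist p q := lineFn_sub_le hq0 p q

lemma abs_envelope_sub_le {p q : ℝ × ℝ} (hp : p ∈ triangle) (hq : q ∈ triangle) :
    |envelope p - envelope q| ≤ euclDist p q :=
  abs_sub_le_iff.2 ⟨envelope_sub_le hp hq, euclDist_comm p q ▸ envelope_sub_le hq hp⟩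

lemma segIndex_eq_of_envelope_sub_eq {p q : ℝ × ℝ} (hp : p ∈ triangle) (hq : q ∈ triangle)
    (h : envelope p - envelope q = euclDist p q) : segIndex q = segIndex p := by
  obtain ⟨⟨hq0, -⟩, hqseg⟩ := segIndex_spec hq
  obtain ⟨⟨hp0, -⟩, hpseg⟩ := segIndex_spec hp
  by_contra hne
  have hlt := lineFn_lt_of_mem_seg hp0 hq0 (Ne.symm hne) hpseg
  have hlip := lineFn_sub_le hq0 p q
  unfold envelope at h
  linarith

lemma exists_seg_of_envelope_sub_eq {p q : ℝ × ℝ} (hp : p ∈ triangle) (hq : q ∈ triangle)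
    (h : envelope p - envelope q = euclDist p q) :
    ∃ a ∈ Icc (0 : ℝ) 1, p ∈ seg a ∧ q ∈ seg a := by
  refine ⟨segIndex p, (segIndex_spec hp).1, (segIndex_spec hp).2, ?_⟩
  rw [← segIndex_eq_of_envelope_sub_eq hp hq h]
  exact (segIndex_spec hq).2

lemma abs_envelope_sub_of_mem_seg {p q : ℝ × ℝ} (hp : p ∈ triangle) (hq : q ∈ triangle)
    {a : ℝ} (ha : 0 ≤ a) (hpa : p ∈ seg a) (hqa : q ∈ seg a) :
    |envelope p - envelope q| = euclDist p q := by
  rw [envelope, envelope, segIndex_eq hp ha hpa, segIndex_eq hq ha hqa]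
  exact abs_lineFn_sub_of_mem_seg ha hpa hqa

end LowerEnvelope

open LowerEnvelope

/-- There is a function `u` on the triangle `Δ_{ABC}` with `|u(p)−u(q)| ≤ |p−q|`
for all `p, q ∈ Δ_{ABC}`, with equality if and only if `p` and `q` lie on a common
segment `ℓ_a`. -/
theorem stmt_18 (Δ : Set (ℝ × ℝ))
    (hΔ : Δ = convexHull ℝ {((-3 : ℝ), (0 : ℝ)), ((1 : ℝ), (4 : ℝ)), ((1 : ℝ), (0 : ℝ))})
    (ell : ℝ → Set (ℝ × ℝ))
    (hell : ∀ a, ell a = {p : ℝ × ℝ |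
      ∃ x : ℝ, -2 - a ≤ x ∧ x ≤ 1 ∧ p = (x, Real.sqrt a * (x + 2 + a))}) :
    ∃ u : ℝ × ℝ → ℝ, ∀ p ∈ Δ, ∀ q ∈ Δ,
      |u p - u q| ≤ Real.sqrt ((p.1 - q.1) ^ 2 + (p.2 - q.2) ^ 2) ∧
      (|u p - u q| = Real.sqrt ((p.1 - q.1) ^ 2 + (p.2 - q.2) ^ 2) ↔
        ∃ a ∈ Set.Icc (0 : ℝ) 1, p ∈ ell a ∧ q ∈ ell a) := by
  obtain rfl : ell = seg := funext hell
  subst hΔ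
  refine ⟨envelope, fun p hp q hq => ⟨abs_envelope_sub_le hp hq, ?_, ?_⟩⟩
  · intro h
    rcases (abs_eq (Real.sqrt_nonneg _)).1 h with h | h
    · exact exists_seg_of_envelope_sub_eq hp hq h
    · obtain ⟨a, ha, hqa, hpa⟩ := exists_seg_of_envelope_sub_eq hq hp
        (by rw [euclDist_comm, euclDist]; linarith)
      exact ⟨a, ha, hpa, hqa⟩
  · rintro ⟨a, ha, hpa, hqa⟩
    exact abs_envelope_sub_of_mem_seg hp hq ha.1 hpa hqa
end

section
/- If a measure-preserving map T from density f ≡ 1 to density g on Δ_{ABC} maps each ray ℓ_a to itself monotonically, and x(σ) denotes the first coordinate of T(−2, σ) with σ = a^{3/2}, then x(σ) ≥ −2 + (√5 − 2)a for all sufficiently small a > 0, and consequently limsup_{σ→0⁺} (x(σ) − x(0))/σ = +∞; in particular T is not Lipschitz at the point (−2, 0). -/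
/-!
Along the ray `ℓ_a` the mass balance reads `5a²/2 = ∫₀ˢ (t + 2a) g`, where
`s = x(σ) + 2 + a`. Near the vertex `(-2 - a, 0)` the density `g` is at most `7/10` once `a`
is small, because `η(√a t) = O(a³)` there; if `s < (√5 - 1) a` the right-hand side would be
at most `(7/10)(1 + √5) a² < 5a²/2`. Hence `x(σ) - x(0) ≥ (√5 - 2) a = (√5 - 2) σ^{2/3}`,
which dominates `σ`, so the difference quotients at `σ = 0` are unbounded.
-/

open Set Filter Topology intervalIntegral

lemma integral_id_add_const (c s : ℝ) : ∫ t in (0 : ℝ)..s, (t + c) = s ^ 2 / 2 + c * s := by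
  rw [integral_add intervalIntegrable_id intervalIntegrable_const, integral_id, integral_const,
    smul_eq_mul]
  ring

lemma integral_id_add_const_mul_le {c m s : ℝ} {h : ℝ → ℝ} (hc : 0 ≤ c) (hs : 0 ≤ s)
    (h_nonneg : ∀ t ∈ Ioc 0 s, 0 ≤ h t) (h_le : ∀ t ∈ Ioc 0 s, h t ≤ m) :
    ∫ t in (0 : ℝ)..s, (t + c) * h t ≤ m * (s ^ 2 / 2 + c * s) := by
  have hmono : ∫ t in (0 : ℝ)..s, (t + c) * h t ≤ ∫ t in (0 : ℝ)..s, (t + c) * m := by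
    rw [integral_of_le hs, integral_of_le hs]
    refine MeasureTheory.integral_mono_of_nonneg ?_ ?_ ?_
    · filter_upwards [MeasureTheory.ae_restrict_mem measurableSet_Ioc] with t ht
      exact mul_nonneg (by linarith [ht.1]) (h_nonneg t ht)
    · exact ((continuous_id.add continuous_const).mul continuous_const).integrableOn_Ioc
    · filter_upwards [MeasureTheory.ae_restrict_mem measurableSet_Ioc] with t ht
      exact mul_le_mul_of_nonneg_left (h_le t ht) (by linarith [ht.1])
  rwa [integral_mul_const, integral_id_add_const, mul_comm] at hmono

/-- `7/10` only has to lie below `5 / (2 (1 + √5)) ≈ 0.77`: then `s < (√5 - 1) a` would push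
the right-hand side below `5a²/2`. -/
lemma sqrt_five_sub_one_mul_le_of_mass_balance {a s : ℝ} {h : ℝ → ℝ} (ha : 0 < a) (hs : 0 ≤ s)
    (h_nonneg : ∀ t ∈ Ioc 0 s, 0 ≤ h t) (h_le : ∀ t ∈ Ioc 0 (2 * a), h t ≤ 7 / 10)
    (hbal : ∫ t in (0 : ℝ)..a, (t + 2 * a) = ∫ t in (0 : ℝ)..s, (t + 2 * a) * h t) :
    (√5 - 1) * a ≤ s := by
  have h5 : √5 ^ 2 = 5 := Real.sq_sqrt (by norm_num)
  have h5_lt : √5 < 3 := by nlinarith [Real.sqrt_nonneg 5]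
  by_contra! hlt
  have hs2a : s ≤ 2 * a := by nlinarith
  have hupper := integral_id_add_const_mul_le (by positivity : (0 : ℝ) ≤ 2 * a) hs h_nonneg
    (fun t ht => h_le t ⟨ht.1, ht.2.trans hs2a⟩)
  rw [← hbal, integral_id_add_const] at hupper
  have h5a : 0 < (3 - √5) * (a * a) := by have := mul_pos ha ha; nlinarith
  nlinarith [mul_lt_mul'' hlt hlt hs hs, mul_le_mul_of_nonneg_left hlt.le ha.le]

lemma density_le_seven_tenths {η : ℝ → ℝ} {C a t : ℝ}
    (hη : ∀ y ∈ Icc (0 : ℝ) 1, η y ≤ C * y ^ 2) (ha : 0 < a) (ha_le : a ≤ 1 / 4)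
    (haC : (10 * C + 1) * a ≤ 1) (ht : t ∈ Ioc 0 (2 * a)) :
    1 / 2 + (t - a) / 4 + η (√a * t) ≤ 7 / 10 := by
  obtain ⟨ht0, ht2a⟩ := ht
  have hsqrt_le : √a ≤ 1 := Real.sqrt_le_one.mpr (by linarith)
  have hsq : √a ^ 2 = a := Real.sq_sqrt ha.le
  have hηt : η (√a * t) ≤ C * a * t ^ 2 := by
    have := hη (√a * t) ⟨by positivity, by nlinarith [Real.sqrt_nonneg a]⟩
    rwa [mul_pow, hsq, ← mul_assoc] at this
  have hCa : C * a ≤ 1 / 10 := by nlinarith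
  have ht2 : t ^ 2 ≤ 1 / 4 := by nlinarith
  nlinarith [mul_le_mul hCa ht2 (sq_nonneg t) (by norm_num)]

lemma exists_lower_bound_of_mass_balance {η u : ℝ → ℝ} (hη_nonneg : ∀ y, 0 ≤ η y)
    {C : ℝ} (hη : ∀ y ∈ Icc (0 : ℝ) 1, η y ≤ C * y ^ 2)
    (hu_ge : ∀ a ∈ Ioc (0 : ℝ) 1, -2 - a ≤ u a)
    (hbal : ∀ a ∈ Ioc (0 : ℝ) 1, ∫ t in (0 : ℝ)..a, (t + 2 * a) =
      ∫ t in (0 : ℝ)..(u a + 2 + a), (t + 2 * a) * (1 / 2 + (t - a) / 4 + η (√a * t))) :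
    ∃ a₀ > (0 : ℝ), ∀ a, 0 < a → a ≤ a₀ → -2 + (√5 - 2) * a ≤ u a := by
  refine ⟨min (1 / 4) (1 / (10 * |C| + 1)), by positivity, fun a ha ha₀ => ?_⟩
  have ha_le : a ≤ 1 / 4 := ha₀.trans (min_le_left _ _)
  have haC : (10 * C + 1) * a ≤ 1 := by
    have := (le_div_iff₀ (by positivity)).mp (ha₀.trans (min_le_right _ _))
    nlinarith [le_abs_self C]
  have ha_mem : a ∈ Ioc (0 : ℝ) 1 := ⟨ha, by linarith⟩
  have hs := sqrt_five_sub_one_mul_le_of_mass_balance ha (by linarith [hu_ge a ha_mem])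
    (fun t ht => by linarith [hη_nonneg (√a * t), ht.1])
    (fun t ht => density_le_seven_tenths hη ha ha_le haC ht) (hbal a ha_mem)
  linarith

lemma tendsto_rpow_nhdsGT_zero {p : ℝ} (hp : 0 < p) :
    Tendsto (fun a : ℝ => a ^ p) (𝓝[>] 0) (𝓝[>] 0) :=
  tendsto_nhdsWithin_iff.mpr
    ⟨((Real.continuous_rpow_const hp.le).tendsto' 0 0 (Real.zero_rpow hp.ne')).mono_left
      nhdsWithin_le_nhds, eventually_mem_nhdsWithin.mono fun _ ha => Real.rpow_pos_of_pos ha p⟩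

lemma tendsto_div_rpow_atTop_of_linear_le {f : ℝ → ℝ} {c p : ℝ} (hc : 0 < c) (hp : 1 < p)
    (hf : ∀ᶠ a in 𝓝[>] 0, c * a ≤ f a) :
    Tendsto (fun a => f a / a ^ p) (𝓝[>] 0) atTop := by
  refine tendsto_atTop_mono' _ ?_
    ((tendsto_rpow_neg_nhdsGT_zero (sub_neg.mpr hp : 1 - p < 0)).const_mul_atTop hc)
  filter_upwards [hf, self_mem_nhdsWithin] with a hfa (ha : 0 < a)
  rw [Real.rpow_sub ha, Real.rpow_one, ← mul_div_assoc]
  exact div_le_div_of_nonneg_right hfa (Real.rpow_pos_of_pos ha p).le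

lemma not_lipschitzAt_of_frequently {T : ℝ × ℝ → ℝ × ℝ} {x : ℝ → ℝ} {b K : ℝ}
    (hT : ∀ σ, (T (b, σ)).1 = x σ) (hx : ∃ᶠ σ in 𝓝[>] 0, K < (x σ - x 0) / σ) :
    ¬ ∀ p : ℝ × ℝ, dist (T p) (T (b, 0)) ≤ K * dist p (b, 0) := by
  intro hK
  obtain ⟨σ, hσK, hσ : 0 < σ⟩ := (hx.and_eventually self_mem_nhdsWithin).exists
  have hdist : dist (b, σ) (b, 0) = σ := by
    simp [Prod.dist_eq, abs_of_pos hσ, hσ.le]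
  have hfst : x σ - x 0 ≤ dist (T (b, σ)) (T (b, 0)) := by
    rw [← hT, ← hT, Prod.dist_eq, Real.dist_eq]
    exact (le_abs_self _).trans (le_max_left _ _)
  have hslope : K * σ < x σ - x 0 := (lt_div_iff₀ hσ).mp hσK
  have hLip := hK (b, σ)
  rw [hdist] at hLip
  linarith

/-- Counterexample: if a measure-preserving map `T` from `f ≡ 1` to `g = 1 + x/4 + η(y)`
on the triangle maps each ray `ℓ_a` to itself monotonically, and `x(σ)` is the first
coordinate of `T(−2,σ)` with `σ = a^{3/2}` (so the mass balance
`∫_0^a (t+2a) dt = ∫_0^{x_σ+2+a} (t+2a)(1/2+(t−a)/4+η(√a t)) dt` holds), then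
`x(σ) ≥ −2 + (√5−2)a` for small `a > 0`, `limsup_{σ→0⁺}(x(σ)−x(0))/σ = +∞`, and `T`
is not Lipschitz at `(−2,0)`. -/
theorem stmt_19 (η : ℝ → ℝ) (hηnn : ∀ y, 0 ≤ η y)
    (hηO : ∃ C > (0 : ℝ), ∀ y ∈ Set.Icc (0 : ℝ) 1, η y ≤ C * y ^ 2)
    (x : ℝ → ℝ) (hx0 : x 0 = -2)
    (hrange : ∀ a ∈ Set.Ioc (0 : ℝ) 1, x (a ^ ((3 : ℝ) / 2)) ∈ Set.Icc (-2 - a) 1)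
    (hbal : ∀ a ∈ Set.Ioc (0 : ℝ) 1,
      (∫ t in (0 : ℝ)..a, (t + 2 * a)) =
        ∫ t in (0 : ℝ)..(x (a ^ ((3 : ℝ) / 2)) + 2 + a),
          (t + 2 * a) * (1 / 2 + (t - a) / 4 + η (Real.sqrt a * t)))
    (T : ℝ × ℝ → ℝ × ℝ) (hT : ∀ σ : ℝ, (T (-2, σ)).1 = x σ) :
    (∃ a₀ > (0 : ℝ), ∀ a, 0 < a → a ≤ a₀ → a ≤ 1 →
      x (a ^ ((3 : ℝ) / 2)) ≥ -2 + (Real.sqrt 5 - 2) * a) ∧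
    (∀ M : ℝ, ∃ᶠ σ in nhdsWithin (0 : ℝ) (Set.Ioi 0), M < (x σ - x 0) / σ) ∧
    ¬ ∃ K : ℝ, ∀ p : ℝ × ℝ, dist (T p) (T (-2, 0)) ≤ K * dist p ((-2 : ℝ), (0 : ℝ)) := by
  obtain ⟨C, -, hη⟩ := hηO
  obtain ⟨a₀, ha₀, hlower⟩ :=
    exists_lower_bound_of_mass_balance hηnn hη (fun a ha => (hrange a ha).1) hbal
  have hlinear : ∀ᶠ a in 𝓝[>] 0, (√5 - 2) * a ≤ x (a ^ ((3 : ℝ) / 2)) - x 0 := by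
    filter_upwards [Ioc_mem_nhdsGT ha₀] with a ha
    linarith [hlower a ha.1 ha.2]
  have hfreq : ∀ M : ℝ, ∃ᶠ σ in 𝓝[>] 0, M < (x σ - x 0) / σ := fun M =>
    (tendsto_rpow_nhdsGT_zero (by norm_num)).frequently
      ((tendsto_div_rpow_atTop_of_linear_le (by norm_num [Real.lt_sqrt]) (by norm_num)
        hlinear).eventually_gt_atTop M).frequently
  exact ⟨⟨a₀, ha₀, fun a ha ha_le _ => hlower a ha ha_le⟩, hfreq,
    fun ⟨K, hK⟩ => not_lipschitzAt_of_frequently hT (hfreq K) hK⟩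
end
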